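/- arXiv:1102.0435 — 4 statements merged into one kernel-verified Lean document; each statement's English description precedes it below -/
import Mathlib

section
/- Let Γ be a convex lattice polygon in ℝ² (convex hull of a finite nonempty set of points of ℤ²) whose set of interior lattice points is nonempty, and let Γ' be the convex hull of the interior lattice points of Γ. Then for every nonzero linear functional h ∈ Hom(ℤ²,ℤ), the width of Γ in direction h is at least the width of Γ' in direction h plus 2, i.e. (max_{v∈Γ} h(v) − min_{v∈Γ} h(v)) ≥ (max_{w∈Γ'} h(w) − min_{w∈Γ'} h(w)) + 2. -/
noncomputable section

/-- `p` is a lattice point of `ℤ² ⊂ ℝ²`. -/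
def IsLat (p : ℝ × ℝ) : Prop := (∃ m : ℤ, p.1 = m) ∧ (∃ n : ℤ, p.2 = n)

/-- evaluation of the integral linear functional `h` at a point `p`. -/
def ev (h : ℤ × ℤ) (p : ℝ × ℝ) : ℝ := (h.1 : ℝ) * p.1 + (h.2 : ℝ) * p.2

/-- the maximum of `h` on `Γ`. -/
def maxW (Γ : Set (ℝ × ℝ)) (h : ℤ × ℤ) : ℝ := sSup (ev h '' Γ)

/-- the minimum of `h` on `Γ`. -/
def minW (Γ : Set (ℝ × ℝ)) (h : ℤ × ℤ) : ℝ := sInf (ev h '' Γ)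

/-- the width of `Γ` in direction `h`. -/
def width (Γ : Set (ℝ × ℝ)) (h : ℤ × ℤ) : ℝ := maxW Γ h - minW Γ h

/-- the adjoint polygon: convex hull of the interior lattice points of `Γ`. -/
def adjoint (Γ : Set (ℝ × ℝ)) : Set (ℝ × ℝ) :=
  convexHull ℝ {p | p ∈ interior Γ ∧ IsLat p}

/-- `h` is tight for `Γ` (max-tight and min-tight with respect to the adjoint). -/
def Tight (Γ : Set (ℝ × ℝ)) (h : ℤ × ℤ) : Prop :=
  maxW Γ h = maxW (adjoint Γ) h + 1 ∧ minW Γ h = minW (adjoint Γ) h - 1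

/-- the lattice width of `Γ`: minimal width over nonzero integral directions. -/
def latticeWidth (Γ : Set (ℝ × ℝ)) : ℝ := sInf (width Γ '' {h : ℤ × ℤ | h ≠ 0})

/-- a primitive integral direction. -/
def IsPrimitive (h : ℤ × ℤ) : Prop := Int.gcd h.1 h.2 = 1

/-- the set of optimal (minimal width) nonzero directions of `Γ`. -/
def optimalSet (Γ : Set (ℝ × ℝ)) : Set (ℤ × ℤ) :=
  {h | h ≠ 0 ∧ width Γ h = latticeWidth Γ}

lemma evInt (h : ℤ × ℤ) (p : ℝ × ℝ) (hp : IsLat p) : ∃ k : ℤ, ev h p = k := by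
  obtain ⟨⟨a, ha⟩, ⟨b, hb⟩⟩ := hp
  exact ⟨h.1 * a + h.2 * b, by simp [ev, ha, hb]⟩

lemma evLin (h : ℤ × ℤ) : IsLinearMap ℝ (ev h) := by
  constructor
  · intro p q; simp [ev]; ring
  · intro c p; simp [ev]; ring

/-- lower bound for the width of a convex lattice polygon in terms
of the width of its adjoint. -/
theorem stmt_0 (S : Set (ℝ × ℝ)) (hfin : S.Finite) (hne : S.Nonempty)
    (hlat : ∀ p ∈ S, IsLat p)
    (Γ : Set (ℝ × ℝ)) (hΓ : Γ = convexHull ℝ S)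
    (hint : {p | p ∈ interior Γ ∧ IsLat p}.Nonempty)
    (h : ℤ × ℤ) (hh : h ≠ 0) :
    width (adjoint Γ) h + 2 ≤ width Γ h := by
  have hSsub : S ⊆ Γ := hΓ ▸ subset_convexHull ℝ S
  have hconv : Convex ℝ Γ := hΓ ▸ convex_convexHull ℝ S
  have hlin := evLin h
  have hAfin : (ev h '' S).Finite := hfin.image _
  have hAne : (ev h '' S).Nonempty := hne.image _
  set M := sSup (ev h '' S) with hMdef
  set m := sInf (ev h '' S) with hmdef
  obtain ⟨sM, hsM, hsMe⟩ := hAne.csSup_mem hAfin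
  obtain ⟨sm, hsm, hsme⟩ := hAne.csInf_mem hAfin
  rw [← hMdef] at hsMe
  rw [← hmdef] at hsme
  have hΓle : ∀ p ∈ Γ, ev h p ≤ M := by
    intro p hp
    have hsub : Γ ⊆ {q | ev h q ≤ M} := by
      rw [hΓ]
      exact convexHull_min (fun s hs => le_csSup hAfin.bddAbove ⟨s, hs, rfl⟩)
        (convex_halfSpace_le hlin M)
    exact hsub hp
  have hΓge : ∀ p ∈ Γ, m ≤ ev h p := by
    intro p hp
    have hsub : Γ ⊆ {q | m ≤ ev h q} := by
      rw [hΓ]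
      exact convexHull_min (fun s hs => csInf_le hAfin.bddBelow ⟨s, hs, rfl⟩)
        (convex_halfSpace_ge hlin m)
    exact hsub hp
  have hΓne : Γ.Nonempty := hne.mono hSsub
  have hmaxΓ : maxW Γ h = M := by
    refine le_antisymm (csSup_le (hΓne.image _) ?_) (le_csSup ⟨M, ?_⟩ ⟨sM, hSsub hsM, hsMe⟩)
    · rintro x ⟨p, hp, rfl⟩; exact hΓle p hp
    · rintro x ⟨p, hp, rfl⟩; exact hΓle p hp
  have hminΓ : minW Γ h = m := by
    refine le_antisymm (csInf_le ⟨m, ?_⟩ ⟨sm, hSsub hsm, hsme⟩) (le_csInf (hΓne.image _) ?_)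
    · rintro x ⟨p, hp, rfl⟩; exact hΓge p hp
    · rintro x ⟨p, hp, rfl⟩; exact hΓge p hp
  obtain ⟨kM, hkM⟩ : ∃ k : ℤ, M = k := by
    obtain ⟨k, hk⟩ := evInt h sM (hlat sM hsM); exact ⟨k, by rw [← hsMe, hk]⟩
  obtain ⟨km, hkm⟩ : ∃ k : ℤ, m = k := by
    obtain ⟨k, hk⟩ := evInt h sm (hlat sm hsm); exact ⟨k, by rw [← hsme, hk]⟩
  -- strict inequalities for interior points
  set v : ℝ × ℝ := ((h.1 : ℝ), (h.2 : ℝ)) with hvdef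
  have hv : v ≠ 0 := by
    intro e
    apply hh
    have h1 : (h.1 : ℝ) = 0 := congrArg Prod.fst e
    have h2 : (h.2 : ℝ) = 0 := congrArg Prod.snd e
    exact Prod.ext (by exact_mod_cast h1) (by exact_mod_cast h2)
  have hvn : 0 < ‖v‖ := norm_pos_iff.mpr hv
  have hsq : 0 < (h.1 : ℝ) ^ 2 + (h.2 : ℝ) ^ 2 := by
    rcases Prod.mk.injEq .. ▸ (fun e => hv e) with _
    have : (h.1 : ℝ) ≠ 0 ∨ (h.2 : ℝ) ≠ 0 := by
      by_contra hc
      push_neg at hc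
      exact hv (Prod.ext hc.1 hc.2)
    rcases this with h1 | h2
    · positivity
    · positivity
  have key : ∀ p ∈ interior Γ, ev h p < M ∧ m < ev h p := by
    intro p hp
    obtain ⟨ε, hε, hball⟩ := Metric.isOpen_iff.mp isOpen_interior p hp
    set t : ℝ := ε / (2 * ‖v‖) with htdef
    have ht : 0 < t := by positivity
    have hdist : ∀ s : ℝ × ℝ, ‖s‖ = ε / 2 → p + s ∈ Γ := by
      intro s hs
      apply interior_subset (hball ?_)
      rw [Metric.mem_ball, dist_eq_norm]
      simp [hs]
      linarith
    have hnrm : ‖t • v‖ = ε / 2 := by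
      rw [norm_smul, Real.norm_eq_abs, abs_of_pos ht, htdef]
      field_simp
    have hq1 : p + t • v ∈ Γ := hdist _ hnrm
    have hq2 : p + (-t) • v ∈ Γ := by
      apply hdist
      rw [norm_smul, Real.norm_eq_abs, abs_neg, abs_of_pos ht, htdef]
      field_simp
    have e1 : ev h (p + t • v) = ev h p + t * ((h.1 : ℝ) ^ 2 + (h.2 : ℝ) ^ 2) := by
      simp [ev, hvdef, Prod.fst_add, Prod.snd_add]
      ring
    have e2 : ev h (p + (-t) • v) = ev h p - t * ((h.1 : ℝ) ^ 2 + (h.2 : ℝ) ^ 2) := by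
      simp [ev, hvdef, Prod.fst_add, Prod.snd_add]
      ring
    have hb1 := hΓle _ hq1
    have hb2 := hΓge _ hq2
    rw [e1] at hb1
    rw [e2] at hb2
    constructor
    · nlinarith
    · nlinarith
  have keyInt : ∀ p ∈ {p | p ∈ interior Γ ∧ IsLat p}, ev h p ≤ M - 1 ∧ m + 1 ≤ ev h p := by
    rintro p ⟨hpi, hplat⟩
    obtain ⟨k, hk⟩ := evInt h p hplat
    obtain ⟨hlt, hgt⟩ := key p hpi
    rw [hk] at hlt hgt ⊢
    rw [hkM] at hlt ⊢
    rw [hkm] at hgt ⊢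
    have h1 : k < kM := by exact_mod_cast hlt
    have h2 : km < k := by exact_mod_cast hgt
    constructor
    · have : k ≤ kM - 1 := by omega
      have := (Int.cast_le (R := ℝ)).mpr this
      push_cast at this ⊢
      linarith
    · have : km + 1 ≤ k := by omega
      have := (Int.cast_le (R := ℝ)).mpr this
      push_cast at this ⊢
      linarith
  have hadjne : (adjoint Γ).Nonempty := hint.mono (subset_convexHull ℝ _)
  have hadjle : ∀ p ∈ adjoint Γ, ev h p ≤ M - 1 := by
    intro p hp
    have hsub : adjoint Γ ⊆ {q | ev h q ≤ M - 1} :=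
      convexHull_min (fun s hs => (keyInt s hs).1) (convex_halfSpace_le hlin (M - 1))
    exact hsub hp
  have hadjge : ∀ p ∈ adjoint Γ, m + 1 ≤ ev h p := by
    intro p hp
    have hsub : adjoint Γ ⊆ {q | m + 1 ≤ ev h q} :=
      convexHull_min (fun s hs => (keyInt s hs).2) (convex_halfSpace_ge hlin (m + 1))
    exact hsub hp
  have hmaxadj : maxW (adjoint Γ) h ≤ M - 1 := by
    apply csSup_le (hadjne.image _)
    rintro x ⟨p, hp, rfl⟩; exact hadjle p hp
  have hminadj : m + 1 ≤ minW (adjoint Γ) h := by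
    apply le_csInf (hadjne.image _)
    rintro x ⟨p, hp, rfl⟩; exact hadjge p hp
  rw [width, width, hmaxΓ, hminΓ]
  linarith
end
end

section
/- Let Γ be a convex lattice polygon in ℝ² with nonempty adjoint Γ' (the convex hull of its interior lattice points), and let h be a nonzero integral linear functional. Then width_Γ(h) = width_{Γ'}(h) + 2 if and only if h is tight for Γ, i.e. max_{v∈Γ} h(v) = max_{w∈Γ'} h(w) + 1 and min_{v∈Γ} h(v) = min_{w∈Γ'} h(w) − 1. -/
noncomputable section

/-!
A nonzero linear functional is an open map, so every interior lattice point `p` of `Γ` satisfies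
`h p < max_Γ h`. Since `max_Γ h` is attained at a lattice vertex, both sides are integers, hence
`h p ≤ max_Γ h - 1` and `max_{Γ'} h + 1 ≤ max_Γ h`. Applied to `-h` this gives
`min_Γ h ≤ min_{Γ'} h - 1`. Adding the two inequalities, `width_Γ h = width_{Γ'} h + 2` holds
exactly when both are equalities.
-/

open Set

lemma ev_neg (h : ℤ × ℤ) (p : ℝ × ℝ) : ev (-h) p = -ev h p := by
  simp only [ev, Prod.fst_neg, Prod.snd_neg, Int.cast_neg]
  ring

lemma IsLat.exists_ev_eq_intCast {p : ℝ × ℝ} (hp : IsLat p) (h : ℤ × ℤ) :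
    ∃ k : ℤ, ev h p = k := by
  obtain ⟨⟨m, hm⟩, ⟨n, hn⟩⟩ := hp
  exact ⟨h.1 * m + h.2 * n, by simp only [ev, hm, hn]; push_cast; ring⟩

def evₗ (h : ℤ × ℤ) : ℝ × ℝ →ₗ[ℝ] ℝ where
  toFun := ev h
  map_add' x y := by simp only [ev, Prod.fst_add, Prod.snd_add]; ring
  map_smul' c x := by
    simp only [ev, Prod.smul_fst, Prod.smul_snd, smul_eq_mul, RingHom.id_apply]
    ring

lemma evₗ_ne_zero {h : ℤ × ℤ} (hh : h ≠ 0) : evₗ h ≠ 0 := by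
  intro he
  have h₁ : ev h (1, 0) = 0 := LinearMap.congr_fun he (1, 0)
  have h₂ : ev h (0, 1) = 0 := LinearMap.congr_fun he (0, 1)
  simp only [ev, mul_one, mul_zero, add_zero, zero_add, Int.cast_eq_zero] at h₁ h₂
  exact hh (Prod.ext h₁ h₂)

lemma ev_le_of_mem_convexHull {s : Set (ℝ × ℝ)} {h : ℤ × ℤ} {c : ℝ}
    (hs : ∀ x ∈ s, ev h x ≤ c) {x : ℝ × ℝ} (hx : x ∈ convexHull ℝ s) : ev h x ≤ c :=
  convexHull_min hs (convex_halfSpace_le (evₗ h).isLinear c) hx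

lemma ev_lt_of_mem_interior {Γ : Set (ℝ × ℝ)} {h : ℤ × ℤ} (hh : h ≠ 0) {c : ℝ}
    (hΓ : ∀ x ∈ Γ, ev h x ≤ c) {p : ℝ × ℝ} (hp : p ∈ interior Γ) : ev h p < c := by
  have hopen : IsOpenMap (evₗ h) :=
    (evₗ h).isOpenMap_of_finiteDimensional (LinearMap.surjective_of_ne_zero (evₗ_ne_zero hh))
  have hsub : ev h '' Γ ⊆ Iic c := by
    rintro _ ⟨x, hx, rfl⟩
    exact hΓ x hx
  have := interior_mono hsub (hopen.image_interior_subset Γ (mem_image_of_mem _ hp))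
  rwa [interior_Iic] at this

lemma maxW_convexHull_le {s : Set (ℝ × ℝ)} (hs : s.Nonempty) {h : ℤ × ℤ} {c : ℝ}
    (hb : ∀ x ∈ s, ev h x ≤ c) : maxW (convexHull ℝ s) h ≤ c := by
  refine csSup_le (hs.mono (subset_convexHull ℝ s) |>.image _) ?_
  rintro _ ⟨x, hx, rfl⟩
  exact ev_le_of_mem_convexHull hb hx

lemma exists_isGreatest_ev_convexHull {S : Set (ℝ × ℝ)} (hfin : S.Finite) (hne : S.Nonempty)
    (h : ℤ × ℤ) : ∃ a ∈ S, IsGreatest (ev h '' convexHull ℝ S) (ev h a) := by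
  obtain ⟨a, haS, hmax⟩ := exists_max_image S (ev h) hfin hne
  refine ⟨a, haS, mem_image_of_mem _ (subset_convexHull ℝ S haS), ?_⟩
  rintro _ ⟨x, hx, rfl⟩
  exact ev_le_of_mem_convexHull hmax hx

lemma minW_eq_neg_maxW_neg (Γ : Set (ℝ × ℝ)) (h : ℤ × ℤ) :
    minW Γ h = -maxW Γ (-h) := by
  rw [minW, maxW, Real.sInf_def, ← image_neg_eq_neg, image_image]
  simp only [ev_neg]

lemma maxW_adjoint_add_one_le {S : Set (ℝ × ℝ)} (hfin : S.Finite) (hne : S.Nonempty)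
    (hlat : ∀ p ∈ S, IsLat p)
    (hint : {p | p ∈ interior (convexHull ℝ S) ∧ IsLat p}.Nonempty)
    {h : ℤ × ℤ} (hh : h ≠ 0) :
    maxW (adjoint (convexHull ℝ S)) h + 1 ≤ maxW (convexHull ℝ S) h := by
  obtain ⟨a, haS, hgreatest⟩ := exists_isGreatest_ev_convexHull hfin hne h
  obtain ⟨m, hm⟩ := (hlat a haS).exists_ev_eq_intCast h
  have hinterior :
      ∀ p ∈ {p | p ∈ interior (convexHull ℝ S) ∧ IsLat p}, ev h p ≤ m - 1 := by
    rintro p ⟨hp, hpLat⟩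
    obtain ⟨k, hk⟩ := hpLat.exists_ev_eq_intCast h
    have hlt := ev_lt_of_mem_interior hh (fun x hx => hgreatest.2 (mem_image_of_mem _ hx)) hp
    rw [hk, hm, Int.cast_lt] at hlt
    rw [hk]
    exact_mod_cast Int.le_sub_one_of_lt hlt
  have hmaxW : maxW (convexHull ℝ S) h = m := hgreatest.csSup_eq.trans hm
  have hadjoint : maxW (adjoint (convexHull ℝ S)) h ≤ m - 1 := maxW_convexHull_le hint hinterior
  linarith

/-- equality `width Γ h = width Γ' h + 2` holds iff `h` is tight for `Γ`. -/
theorem stmt_1 (S : Set (ℝ × ℝ)) (hfin : S.Finite) (hne : S.Nonempty)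
    (hlat : ∀ p ∈ S, IsLat p)
    (Γ : Set (ℝ × ℝ)) (hΓ : Γ = convexHull ℝ S)
    (hint : {p | p ∈ interior Γ ∧ IsLat p}.Nonempty)
    (h : ℤ × ℤ) (hh : h ≠ 0) :
    width Γ h = width (adjoint Γ) h + 2 ↔ Tight Γ h := by
  subst hΓ
  have hmax := maxW_adjoint_add_one_le hfin hne hlat hint hh
  have hmin := maxW_adjoint_add_one_le hfin hne hlat hint (neg_ne_zero.mpr hh)
  simp only [width, Tight, minW_eq_neg_maxW_neg]
  constructor
  · intro hw
    constructor <;> linarith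
  · rintro ⟨hw₁, hw₂⟩
    linarith
end
end

section
/- The interior lattice points of the standard triangle of size l (the convex hull of (0,0),(0,l),(l,0) in ℝ²), for l ≥ 3, are exactly the lattice points of the standard triangle of size l−3 translated by (1,1); i.e. the adjoint of the standard triangle of size l is the standard triangle of size l−3 translated by (1,1). In particular, the lattice width of the standard triangle of size l equals the lattice width of its adjoint plus 3. -/
noncomputable section

/-- the standard triangle of size `l`. -/
def stdTri (l : ℕ) : Set (ℝ × ℝ) :=
  convexHull ℝ {((0 : ℝ), (0 : ℝ)), ((0 : ℝ), (l : ℝ)), ((l : ℝ), (0 : ℝ))}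

open Pointwise

def triSet (n : ℝ) : Set (ℝ × ℝ) := {p | 0 ≤ p.1 ∧ 0 ≤ p.2 ∧ p.1 + p.2 ≤ n}

lemma convex_triSet (n : ℝ) : Convex ℝ (triSet n) := by
  rintro p ⟨h1, h2, h3⟩ q ⟨k1, k2, k3⟩ a b ha hb hab
  refine ⟨?_, ?_, ?_⟩ <;>
    simp only [triSet, Set.mem_setOf_eq, Prod.fst_add, Prod.snd_add, Prod.smul_fst,
      Prod.smul_snd, smul_eq_mul] <;> nlinarith

lemma stdTri_eq (n : ℕ) : stdTri n = triSet n := by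
  apply Set.Subset.antisymm
  · apply convexHull_min _ (convex_triSet n)
    intro p hp
    have hn : (0:ℝ) ≤ n := Nat.cast_nonneg n
    rcases hp with h | h | h <;> subst h <;> exact ⟨by simp, by simp, by simp⟩
  · rintro p ⟨h1, h2, h3⟩
    by_cases hs : p.1 + p.2 = 0
    · have hp1 : p.1 = 0 := by linarith
      have hp2 : p.2 = 0 := by linarith
      have : p = ((0:ℝ), (0:ℝ)) := Prod.ext hp1 hp2
      exact subset_convexHull ℝ _ (by simp [this])
    · have hs' : 0 < p.1 + p.2 := lt_of_le_of_ne (by linarith) (Ne.symm hs)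
      have hn : (0:ℝ) < n := lt_of_lt_of_le hs' h3
      set s : ℝ := p.1 + p.2 with hsdef
      set u : ℝ := p.1 / s with hudef
      have hu0 : 0 ≤ u := div_nonneg h1 hs'.le
      have hu1 : u ≤ 1 := by
        rw [hudef, div_le_one hs']; linarith
      have hb' : ((1-u) • (((0:ℝ)), (n:ℝ)) + u • (((n:ℝ)), (0:ℝ))) ∈ stdTri n :=
        (convex_convexHull ℝ _) (subset_convexHull ℝ _ (by simp))
          (subset_convexHull ℝ _ (by simp)) (by linarith) hu0 (by ring)
      have hps : p.1 + p.2 ≠ 0 := hs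
      have hn0 : (n:ℝ) ≠ 0 := hn.ne'
      have hp' : p = (1 - s/n) • (((0:ℝ)), ((0:ℝ))) +
          (s/n) • ((1-u) • (((0:ℝ)), (n:ℝ)) + u • (((n:ℝ)), (0:ℝ))) := by
        rw [hsdef, hudef, hsdef]
        apply Prod.ext <;>
          simp only [Prod.fst_add, Prod.snd_add, Prod.smul_fst, Prod.smul_snd, smul_eq_mul] <;>
          field_simp <;> ring
      rw [hp']
      exact (convex_convexHull ℝ _) (subset_convexHull ℝ _ (by simp)) hb'
        (by rw [sub_nonneg, div_le_one hn]; exact h3) (by positivity) (by ring)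

lemma interior_triSet (n : ℝ) :
    interior (triSet n) = {p | 0 < p.1 ∧ 0 < p.2 ∧ p.1 + p.2 < n} := by
  apply Set.Subset.antisymm
  · intro p hp
    rw [mem_interior_iff_mem_nhds, Metric.mem_nhds_iff] at hp
    obtain ⟨ε, hε, hball⟩ := hp
    have hmem : ∀ q : ℝ × ℝ, dist q.1 p.1 < ε → dist q.2 p.2 < ε → q ∈ triSet n := by
      intro q h1 h2
      exact hball (by rw [Metric.mem_ball, Prod.dist_eq]; exact max_lt h1 h2)
    have e1 := hmem (p.1 - ε/2, p.2) (by simp [Real.dist_eq]; rw [abs_of_pos hε]; linarith) (by simp [hε])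
    have e2 := hmem (p.1, p.2 - ε/2) (by simp [hε]) (by simp [Real.dist_eq]; rw [abs_of_pos hε]; linarith)
    have e3 := hmem (p.1 + ε/2, p.2) (by simp [Real.dist_eq]; rw [abs_of_pos hε]; linarith) (by simp [hε])
    obtain ⟨a1, -, -⟩ := e1
    obtain ⟨-, b2, -⟩ := e2
    obtain ⟨-, -, c3⟩ := e3
    simp only [Set.mem_setOf_eq] at *
    refine ⟨by linarith, by linarith, by linarith⟩
  · apply interior_maximal
    · rintro p ⟨h1, h2, h3⟩; exact ⟨h1.le, h2.le, h3.le⟩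
    · have : {p : ℝ × ℝ | 0 < p.1 ∧ 0 < p.2 ∧ p.1 + p.2 < n}
          = {p : ℝ × ℝ | 0 < p.1} ∩ ({p : ℝ × ℝ | 0 < p.2} ∩ {p : ℝ × ℝ | p.1 + p.2 < n}) := by
        ext p; simp [and_assoc]
      rw [this]
      exact (isOpen_lt continuous_const continuous_fst).inter
        ((isOpen_lt continuous_const continuous_snd).inter
          (isOpen_lt (continuous_fst.add continuous_snd) continuous_const))

lemma bddAbove_ev (n : ℕ) (h : ℤ × ℤ) : BddAbove (ev h '' stdTri n) := by
  refine ⟨(|(h.1:ℝ)| + |(h.2:ℝ)|) * n, ?_⟩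
  rintro x ⟨p, hp, rfl⟩
  rw [stdTri_eq] at hp
  obtain ⟨h1, h2, h3⟩ := hp
  have a1 : (h.1:ℝ) * p.1 ≤ |(h.1:ℝ)| * p.1 := mul_le_mul_of_nonneg_right (le_abs_self _) h1
  have a2 : (h.2:ℝ) * p.2 ≤ |(h.2:ℝ)| * p.2 := mul_le_mul_of_nonneg_right (le_abs_self _) h2
  have b1 : |(h.1:ℝ)| * p.1 ≤ |(h.1:ℝ)| * n :=
    mul_le_mul_of_nonneg_left (by linarith) (abs_nonneg _)
  have b2 : |(h.2:ℝ)| * p.2 ≤ |(h.2:ℝ)| * n :=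
    mul_le_mul_of_nonneg_left (by linarith) (abs_nonneg _)
  simp only [ev]; nlinarith

lemma bddBelow_ev (n : ℕ) (h : ℤ × ℤ) : BddBelow (ev h '' stdTri n) := by
  obtain ⟨M, hM⟩ := bddAbove_ev n (-h)
  refine ⟨-M, ?_⟩
  rintro x ⟨p, hp, rfl⟩
  have := hM ⟨p, hp, rfl⟩
  simp only [ev, Prod.fst_neg, Prod.snd_neg, Int.cast_neg] at this ⊢
  linarith

lemma nonempty_ev (n : ℕ) (h : ℤ × ℤ) : (ev h '' stdTri n).Nonempty :=
  ⟨ev h (0, 0), ⟨(0,0), by rw [stdTri_eq]; exact ⟨le_refl 0, le_refl 0, by simp⟩, rfl⟩⟩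

lemma vertex_mem (n : ℕ) : ((0:ℝ),(0:ℝ)) ∈ stdTri n ∧ ((0:ℝ),(n:ℝ)) ∈ stdTri n ∧
    (((n:ℝ)),(0:ℝ)) ∈ stdTri n :=
  ⟨subset_convexHull ℝ _ (by simp), subset_convexHull ℝ _ (by simp),
    subset_convexHull ℝ _ (by simp)⟩

lemma width_stdTri_ge (n : ℕ) (h : ℤ × ℤ) (hne : h ≠ 0) : (n:ℝ) ≤ width (stdTri n) h := by
  obtain ⟨m0, m1, m2⟩ := vertex_mem n
  have hmax : ∀ p ∈ stdTri n, ev h p ≤ maxW (stdTri n) h :=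
    fun p hp => le_csSup (bddAbove_ev n h) ⟨p, hp, rfl⟩
  have hmin : ∀ p ∈ stdTri n, minW (stdTri n) h ≤ ev h p :=
    fun p hp => csInf_le (bddBelow_ev n h) ⟨p, hp, rfl⟩
  have e0 : ev h ((0:ℝ),(0:ℝ)) = 0 := by simp [ev]
  have e1 : ev h ((0:ℝ),(n:ℝ)) = (h.2:ℝ) * n := by simp [ev]
  have e2 : ev h (((n:ℝ)),(0:ℝ)) = (h.1:ℝ) * n := by simp [ev]
  have hn : (0:ℝ) ≤ n := Nat.cast_nonneg n
  have hcase : h.1 ≠ 0 ∨ h.2 ≠ 0 := by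
    by_contra hc; push_neg at hc; exact hne (Prod.ext hc.1 hc.2)
  unfold width
  rcases hcase with h1 | h2
  · rcases lt_or_gt_of_ne h1 with hlt | hgt
    · have : ((h.1:ℝ)) ≤ -1 := by
        have : h.1 ≤ -1 := by omega
        exact_mod_cast this
      have k1 := hmax _ m0; have k2 := hmin _ m2
      rw [e0] at k1; rw [e2] at k2; nlinarith
    · have : (1:ℝ) ≤ (h.1:ℝ) := by exact_mod_cast hgt
      have k1 := hmax _ m2; have k2 := hmin _ m0
      rw [e2] at k1; rw [e0] at k2; nlinarith
  · rcases lt_or_gt_of_ne h2 with hlt | hgt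
    · have : ((h.2:ℝ)) ≤ -1 := by
        have : h.2 ≤ -1 := by omega
        exact_mod_cast this
      have k1 := hmax _ m0; have k2 := hmin _ m1
      rw [e0] at k1; rw [e1] at k2; nlinarith
    · have : (1:ℝ) ≤ (h.2:ℝ) := by exact_mod_cast hgt
      have k1 := hmax _ m1; have k2 := hmin _ m0
      rw [e1] at k1; rw [e0] at k2; nlinarith

lemma width_stdTri_onezero (n : ℕ) : width (stdTri n) (1, 0) = n := by
  have hmax : maxW (stdTri n) (1,0) = n := by
    apply IsGreatest.csSup_eq
    constructor
    · exact ⟨((n:ℝ),(0:ℝ)), (vertex_mem n).2.2, by simp [ev]⟩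
    · rintro x ⟨p, hp, rfl⟩
      rw [stdTri_eq] at hp
      obtain ⟨h1, h2, h3⟩ := hp
      simp only [ev]; push_cast; linarith
  have hmin : minW (stdTri n) (1,0) = 0 := by
    apply IsLeast.csInf_eq
    constructor
    · exact ⟨((0:ℝ),(0:ℝ)), (vertex_mem n).1, by simp [ev]⟩
    · rintro x ⟨p, hp, rfl⟩
      rw [stdTri_eq] at hp
      obtain ⟨h1, h2, h3⟩ := hp
      simp only [ev]; push_cast; linarith
  rw [width, hmax, hmin, sub_zero]

lemma latticeWidth_stdTri (n : ℕ) : latticeWidth (stdTri n) = n := by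
  apply le_antisymm
  · apply csInf_le
    · exact ⟨(n:ℝ), by rintro x ⟨h, hh, rfl⟩; exact width_stdTri_ge n h hh⟩
    · exact ⟨(1,0), by simp, width_stdTri_onezero n⟩
  · apply le_csInf
    · exact ⟨width (stdTri n) (1,0), ⟨(1,0), by simp, rfl⟩⟩
    · rintro x ⟨h, hh, rfl⟩; exact width_stdTri_ge n h hh

lemma part1 (l : ℕ) (hl : 3 ≤ l) :
    {p : ℝ × ℝ | IsLat p ∧ p ∈ interior (stdTri l)} =
      (fun p : ℝ × ℝ => p + ((1 : ℝ), (1 : ℝ))) '' {p : ℝ × ℝ | IsLat p ∧ p ∈ stdTri (l - 3)} := by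
  have hcast : ((l - 3 : ℕ) : ℝ) = (l : ℝ) - 3 := by
    rw [Nat.cast_sub hl]; norm_num
  ext p
  simp only [Set.mem_setOf_eq, Set.mem_image, stdTri_eq, interior_triSet]
  constructor
  · rintro ⟨⟨⟨m, hm⟩, ⟨k, hk⟩⟩, h1, h2, h3⟩
    refine ⟨(p.1 - 1, p.2 - 1), ⟨⟨⟨m - 1, by push_cast [hm]; ring⟩,
      ⟨k - 1, by push_cast [hk]; ring⟩⟩, ?_, ?_, ?_⟩, by apply Prod.ext <;> simp⟩
    · have : (0:ℝ) < (m:ℝ) := hm ▸ h1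
      have : 0 < m := by exact_mod_cast this
      have : (1:ℝ) ≤ (m:ℝ) := by exact_mod_cast this
      simp only []; rw [hm] at *; linarith
    · have : (0:ℝ) < (k:ℝ) := hk ▸ h2
      have : 0 < k := by exact_mod_cast this
      have : (1:ℝ) ≤ (k:ℝ) := by exact_mod_cast this
      simp only []; rw [hk] at *; linarith
    · have hsum : ((m:ℝ)) + (k:ℝ) < (l:ℝ) := by rw [← hm, ← hk]; exact h3
      have : m + k < (l:ℤ) := by exact_mod_cast hsum
      have : m + k ≤ (l:ℤ) - 1 := by omega
      have : ((m:ℝ)) + (k:ℝ) ≤ (l:ℝ) - 1 := by exact_mod_cast this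
      simp only []; rw [hcast, hm, hk] at *; linarith
  · rintro ⟨q, ⟨⟨⟨m, hm⟩, ⟨k, hk⟩⟩, h1, h2, h3⟩, rfl⟩
    rw [hcast] at h3
    refine ⟨⟨⟨m + 1, by push_cast [Prod.fst_add, hm]; ring⟩,
      ⟨k + 1, by push_cast [Prod.snd_add, hk]; ring⟩⟩, ?_, ?_, ?_⟩ <;>
      simp only [Prod.fst_add, Prod.snd_add] <;> linarith

lemma adjoint_stdTri (l : ℕ) (hl : 3 ≤ l) :
    adjoint (stdTri l) = ((1:ℝ), (1:ℝ)) +ᵥ stdTri (l - 3) := by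
  have hset : {p : ℝ × ℝ | p ∈ interior (stdTri l) ∧ IsLat p} =
      (fun p : ℝ × ℝ => p + ((1 : ℝ), (1 : ℝ))) ''
        {p : ℝ × ℝ | IsLat p ∧ p ∈ stdTri (l - 3)} := by
    rw [← part1 l hl]; ext p; simp [and_comm]
  have himg : (fun p : ℝ × ℝ => p + ((1 : ℝ), (1 : ℝ))) ''
      {p : ℝ × ℝ | IsLat p ∧ p ∈ stdTri (l - 3)}
      = ((1:ℝ), (1:ℝ)) +ᵥ {p : ℝ × ℝ | IsLat p ∧ p ∈ stdTri (l - 3)} := by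
    ext x
    rw [Set.mem_vadd_set]
    constructor
    · rintro ⟨q, hq, rfl⟩; exact ⟨q, hq, add_comm _ _⟩
    · rintro ⟨q, hq, rfl⟩; exact ⟨q, hq, add_comm _ _⟩
  have hhull : convexHull ℝ {p : ℝ × ℝ | IsLat p ∧ p ∈ stdTri (l - 3)} = stdTri (l - 3) := by
    apply Set.Subset.antisymm
    · exact convexHull_min (fun p hp => hp.2) (convex_convexHull ℝ _)
    · apply convexHull_mono (s := {((0 : ℝ), (0 : ℝ)), ((0 : ℝ), ((l-3 : ℕ) : ℝ)),
        (((l-3 : ℕ) : ℝ), (0 : ℝ))}) ?_ |>.trans (le_refl _)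
      rintro p (rfl | rfl | rfl)
      · exact ⟨⟨⟨0, by simp⟩, ⟨0, by simp⟩⟩, subset_convexHull ℝ _ (by simp)⟩
      · exact ⟨⟨⟨0, by simp⟩, ⟨(l - 3 : ℕ), by simp⟩⟩, subset_convexHull ℝ _ (by simp)⟩
      · exact ⟨⟨⟨(l - 3 : ℕ), by simp⟩, ⟨0, by simp⟩⟩, subset_convexHull ℝ _ (by simp)⟩
  rw [adjoint, hset, himg, convexHull_vadd, hhull]

lemma sSup_image_add (s : Set ℝ) (hs : s.Nonempty) (hb : BddAbove s) (k : ℝ) :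
    sSup ((fun x => x + k) '' s) = sSup s + k := by
  apply IsLUB.csSup_eq _ (hs.image _)
  have H := isLUB_csSup hs hb
  constructor
  · rintro x ⟨y, hy, rfl⟩; have := H.1 hy; simp only []; linarith
  · intro b hb'
    have : sSup s ≤ b - k := H.2 (fun y hy => by
      have := hb' (Set.mem_image_of_mem _ hy); linarith)
    linarith

lemma sInf_image_add (s : Set ℝ) (hs : s.Nonempty) (hb : BddBelow s) (k : ℝ) :
    sInf ((fun x => x + k) '' s) = sInf s + k := by
  apply IsGLB.csInf_eq _ (hs.image _)
  have H := isGLB_csInf hs hb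
  constructor
  · rintro x ⟨y, hy, rfl⟩; have := H.1 hy; simp only []; linarith
  · intro b hb'
    have : b - k ≤ sInf s := H.2 (fun y hy => by
      have := hb' (Set.mem_image_of_mem _ hy); linarith)
    linarith

lemma width_vadd (m : ℕ) (c : ℝ × ℝ) (h : ℤ × ℤ) :
    width (c +ᵥ stdTri m) h = width (stdTri m) h := by
  have himg : ev h '' (c +ᵥ stdTri m) = (fun x => x + ev h c) '' (ev h '' stdTri m) := by
    ext x
    constructor
    · rintro ⟨p, hp, rfl⟩
      rw [Set.mem_vadd_set] at hp
      obtain ⟨q, hq, rfl⟩ := hp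
      exact ⟨ev h q, Set.mem_image_of_mem _ hq, by simp [ev, Prod.fst_add, Prod.snd_add]; ring⟩
    · rintro ⟨x, ⟨q, hq, rfl⟩, rfl⟩
      refine ⟨c + q, Set.vadd_mem_vadd_set hq, by simp [ev, Prod.fst_add, Prod.snd_add]; ring⟩
  rw [width, width, maxW, maxW, minW, minW, himg,
    sSup_image_add _ (nonempty_ev m h) (bddAbove_ev m h),
    sInf_image_add _ (nonempty_ev m h) (bddBelow_ev m h)]
  ring

lemma final (l : ℕ) (hl : 3 ≤ l) :
    latticeWidth (stdTri l) = latticeWidth (adjoint (stdTri l)) + 3 := by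
  have h1 : latticeWidth (adjoint (stdTri l)) = latticeWidth (stdTri (l - 3)) := by
    rw [adjoint_stdTri l hl, latticeWidth, latticeWidth]
    congr 1
    exact Set.image_congr fun h _ => width_vadd (l - 3) _ h
  rw [h1, latticeWidth_stdTri, latticeWidth_stdTri, Nat.cast_sub hl]
  norm_num

/-- for `l ≥ 3`, the interior lattice points of the standard triangle of
size `l` are the lattice points of the standard triangle of size `l - 3` translated by
`(1,1)`; hence the lattice width drops by exactly `3` under adjunction. -/
theorem stmt_5 (l : ℕ) (hl : 3 ≤ l) :
    ({p : ℝ × ℝ | IsLat p ∧ p ∈ interior (stdTri l)} =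
      (fun p : ℝ × ℝ => p + ((1 : ℝ), (1 : ℝ))) '' {p : ℝ × ℝ | IsLat p ∧ p ∈ stdTri (l - 3)}) ∧
    latticeWidth (stdTri l) = latticeWidth (adjoint (stdTri l)) + 3 :=
  ⟨part1 l hl, final l hl⟩
end
end

section
/- Let (X,D) be a minimally polarized rational surface and P a family on X with P² = 0, D·P = 0, and generic member irreducible of arithmetic genus 0 (so P·K = −2 by adjunction). Then P is the unique family F on X with F·P = 0; in particular, if D = nP then P is the unique optimal rational family on (X,D), of degree D·P = 0. -/
/-- An abstract setup for one-parameter families of curves on a surface: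
points, curves, incidence, intersection numbers, every curve contains a point,
and two distinct curves through a common point have positive intersection number. -/
structure FamilySetup where
  Point : Type
  Curve : Type
  memC : Point → Curve → Prop
  ci : Curve → Curve → ℤ
  curve_nonempty : ∀ C : Curve, ∃ x, memC x C
  meet_pos : ∀ C C' : Curve, C ≠ C' → (∃ x, memC x C ∧ memC x C') → 0 < ci C C'

/-- A (movable) family, regarded as its set of members: through every (generic)
point of the surface there passes a member. -/
def Movable (S : FamilySetup) (F : Set S.Curve) : Prop :=
  ∀ x : S.Point, ∃ C ∈ F, S.memC x C

/-- let `(X,D)` be a minimally polarized rational surface and `P` a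
family with `P² = 0` and `D·P = 0` (generic member irreducible of arithmetic genus 0).
Then `P` is the unique family `F` with `F·P = 0`; in particular if `D = nP` (`n > 0`,
`D` nef so degrees are nonnegative and `degD F = 0 ↔ F·P = 0`), then `P` is the unique
optimal family, of degree `D·P = 0`. -/
theorem stmt_15 (S : FamilySetup) (P : Set S.Curve) (hPmov : Movable S P)
    (hPP : ∀ C ∈ P, ∀ C' ∈ P, S.ci C C' = 0)          -- P² = 0
    (degD : Set S.Curve → ℤ) (n : ℤ) (hn : 0 < n)
    (hnef : ∀ F : Set S.Curve, Movable S F → 0 ≤ degD F)  -- D nef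
    (hDnP : ∀ F : Set S.Curve, Movable S F →
      (degD F = 0 ↔ ∀ C ∈ F, ∀ C' ∈ P, S.ci C C' = 0)) :  -- D = nP numerically
    (∀ F : Set S.Curve, Movable S F →
      (∀ C ∈ F, ∀ C' ∈ P, S.ci C C' = 0) → F = P) ∧       -- P unique with F·P = 0
    degD P = 0 ∧                                          -- degree of P is D·P = 0
    (∀ F : Set S.Curve, Movable S F → degD F ≤ degD P → F = P) := by
  have huniq : ∀ F : Set S.Curve, Movable S F →
      (∀ C ∈ F, ∀ C' ∈ P, S.ci C C' = 0) → F = P := by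
    intro F hFmov hFP
    ext C
    constructor
    · intro hC
      obtain ⟨x, hx⟩ := S.curve_nonempty C
      obtain ⟨C', hC'P, hx'⟩ := hPmov x
      have : C = C' := by
        by_contra hne
        have h1 := S.meet_pos C C' hne ⟨x, hx, hx'⟩
        have h2 := hFP C hC C' hC'P
        omega
      exact this ▸ hC'P
    · intro hC
      obtain ⟨x, hx⟩ := S.curve_nonempty C
      obtain ⟨C', hC'F, hx'⟩ := hFmov x
      have : C' = C := by
        by_contra hne
        have h1 := S.meet_pos C' C hne ⟨x, hx', hx⟩
        have h2 := hFP C' hC'F C hC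
        omega
      exact this ▸ hC'F
  have hP0 : degD P = 0 := (hDnP P hPmov).mpr hPP
  refine ⟨huniq, hP0, ?_⟩
  intro F hFmov hle
  have h0 : degD F = 0 := le_antisymm (hP0 ▸ hle) (hnef F hFmov)
  exact huniq F hFmov ((hDnP F hFmov).mp h0)
end
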